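/- arXiv:1510.08010 — 2 statements merged into one kernel-verified Lean document; each statement's English description precedes it below -/
import Mathlib

section
/- Let {S_i}_{i=1}^N : C → C be nonexpansive mappings with F = ∩_{i=1}^N F(S_i) nonempty, and let {α_n} ⊂ [0,1] satisfy limsup_{n→∞} α_n < 1. Then the sequence {x_n} generated by: x_0 ∈ H; z_n = P_C x_n; y_n^i = α_n z_n + (1-α_n) S_i z_n (i = 1,…,N); i_n attaining max{‖y_n^i - x_n‖ : i = 1,…,N} and ȳ_n = y_n^{i_n}; C_n = {v ∈ H : ‖v - ȳ_n‖ ≤ ‖v - x_n‖}; Q_n = {v ∈ H : ⟨x_0 - x_n, x_n - v⟩ ≥ 0}; x_{n+1} = P_{C_n ∩ Q_n} x_0, converges strongly to P_F x_0. -/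
open Filter Topology
open scoped RealInnerProductSpace

/-- `p` is the metric projection of `x` onto the set `D`:
it belongs to `D` and minimizes the distance to `x` over `D`. -/
def IsMetricProj {H : Type*} [NormedAddCommGroup H] [InnerProductSpace ℝ H]
    (D : Set H) (x p : H) : Prop :=
  p ∈ D ∧ ∀ w ∈ D, ‖p - x‖ ≤ ‖w - x‖

/-!
The point `x_{n+1}` lies in `Q_n`, so `‖x_n - x_0‖` is nondecreasing, and `F` lies in every
`C_n ∩ Q_n`, so `‖x_n - x_0‖ ≤ ‖P_F x_0 - x_0‖`. Hence `‖x_n - x_0‖ → r ≤ ‖P_F x_0 - x_0‖` and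
`x_{n+1} - x_n → 0`, and then `ȳ_n - x_n`, `z_n - x_n` and (as `limsup α_n < 1`) `S_i z_n - z_n`
tend to `0`. A weak cluster point `w` of `(z_n)`, taken along an ultrafilter, lies in `C`, is
fixed by every `S_i` by demiclosedness, and satisfies `‖w - x_0‖ ≤ r` by weak lower
semicontinuity of the norm. So `r = ‖P_F x_0 - x_0‖`, and `P_F x_0 ∈ Q_n` gives
`‖x_n - P_F x_0‖² ≤ ‖P_F x_0 - x_0‖² - ‖x_n - x_0‖² → 0`.
-/

section Normed

variable {E : Type*} [SeminormedAddCommGroup E]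

theorem norm_sub_le_two_mul_of_norm_sub_le {a b c : E} (h : ‖c - b‖ ≤ ‖c - a‖) :
    ‖b - a‖ ≤ 2 * ‖c - a‖ := by
  linarith [norm_sub_le_norm_sub_add_norm_sub b c a, norm_sub_rev b c]

theorem tendsto_norm_sub_of_tendsto_norm_sub_zero {ι : Type*} {l : Filter ι} {f g : ι → E}
    {c : E} {r : ℝ} (hf : Tendsto (fun n => ‖f n - c‖) l (𝓝 r))
    (hfg : Tendsto (fun n => ‖g n - f n‖) l (𝓝 0)) : Tendsto (fun n => ‖g n - c‖) l (𝓝 r) := by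
  have hdiff : Tendsto (fun n => ‖g n - c‖ - ‖f n - c‖) l (𝓝 0) := squeeze_zero_norm (fun n => by
    simpa only [Real.norm_eq_abs, sub_sub_sub_cancel_right] using
      abs_norm_sub_norm_le (g n - c) (f n - c)) hfg
  simpa using hdiff.add hf

variable [NormedSpace ℝ E]

theorem norm_sub_convex_combo_le {u z s : E} {α : ℝ} (hα : α ∈ Set.Icc (0 : ℝ) 1)
    (hs : ‖u - s‖ ≤ ‖u - z‖) : ‖u - (α • z + (1 - α) • s)‖ ≤ ‖u - z‖ := by
  have hmem := convex_closedBall u ‖u - z‖ (x := z) (y := s)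
    (mem_closedBall_iff_norm'.2 le_rfl) (mem_closedBall_iff_norm'.2 hs)
    hα.1 (sub_nonneg.2 hα.2) (add_sub_cancel α 1)
  rwa [mem_closedBall_iff_norm'] at hmem

theorem one_sub_mul_norm_sub_le {α : ℝ} (hα : α ≤ 1) (z s x : E) :
    (1 - α) * ‖s - z‖ ≤ ‖α • z + (1 - α) • s - x‖ + ‖z - x‖ := by
  have hcombo : α • z + (1 - α) • s - z = (1 - α) • (s - z) := by module
  calc (1 - α) * ‖s - z‖ = ‖α • z + (1 - α) • s - z‖ := by
        rw [hcombo, norm_smul, Real.norm_of_nonneg (sub_nonneg.2 hα)]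
    _ ≤ ‖α • z + (1 - α) • s - x‖ + ‖z - x‖ := by
        simpa only [norm_sub_rev x z] using norm_sub_le_norm_sub_add_norm_sub _ x z

end Normed

theorem tendsto_zero_of_one_sub_mul_le {ι : Type*} {l : Filter ι} {a f e : ι → ℝ}
    (ha : limsup a l < 1) (ha₁ : ∀ n, a n ≤ 1) (hf : ∀ n, 0 ≤ f n)
    (hfe : ∀ n, (1 - a n) * f n ≤ e n) (he : Tendsto e l (𝓝 0)) : Tendsto f l (𝓝 0) := by
  obtain ⟨c, hac, hc⟩ := exists_between ha
  have hlt : ∀ᶠ n in l, a n < c := eventually_lt_of_limsup_lt hac (isBoundedUnder_of ⟨1, ha₁⟩)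
  refine squeeze_zero' (Eventually.of_forall hf) ?_ (by simpa using he.div_const (1 - c))
  filter_upwards [hlt] with n hn
  rw [le_div_iff₀ (sub_pos.2 hc), mul_comm]
  exact (mul_le_mul_of_nonneg_right (by linarith) (hf n)).trans (hfe n)

section InnerProduct

variable {H : Type*} [NormedAddCommGroup H] [InnerProductSpace ℝ H]

theorem sq_norm_sub_add_sq_norm_sub_le {a b v : H} (h : 0 ≤ ⟪a - b, b - v⟫) :
    ‖v - b‖ ^ 2 + ‖b - a‖ ^ 2 ≤ ‖v - a‖ ^ 2 := by
  have hinner : ⟪v - b, b - a⟫ = ⟪a - b, b - v⟫ := by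
    rw [← inner_neg_neg, neg_sub, neg_sub, real_inner_comm]
  rw [show v - a = (v - b) + (b - a) by abel, norm_add_sq_real, hinner]
  linarith

theorem convex_setOf_inner_nonneg (a b : H) : Convex ℝ {v | 0 ≤ ⟪a, b - v⟫} := by
  have hlin : IsLinearMap ℝ (fun v : H => ⟪a, v⟫) :=
    ⟨inner_add_right a, fun c v => real_inner_smul_right a v c⟩
  convert convex_halfSpace_le hlin ⟪a, b⟫ using 2 with v
  simp only [inner_sub_right, sub_nonneg]

theorem convex_setOf_norm_sub_le_norm_sub (a b : H) : Convex ℝ {v | ‖v - a‖ ≤ ‖v - b‖} := by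
  have hlin : IsLinearMap ℝ (fun v : H => ⟪b - a, v⟫) :=
    ⟨inner_add_right _, fun c v => real_inner_smul_right _ v c⟩
  convert convex_halfSpace_le hlin ((‖b‖ ^ 2 - ‖a‖ ^ 2) / 2) using 3 with v
  rw [← sq_le_sq₀ (norm_nonneg _) (norm_nonneg _), norm_sub_sq_real,
    norm_sub_sq_real, inner_sub_left, real_inner_comm b, real_inner_comm a]
  constructor <;> intro h <;> linarith

namespace IsMetricProj

variable {D : Set H} {x q : H}

theorem norm_sub_eq_iInf (h : IsMetricProj D x q) : ‖x - q‖ = ⨅ w : D, ‖x - w‖ := by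
  have : Nonempty D := ⟨⟨q, h.1⟩⟩
  refine le_antisymm (le_ciInf fun w => ?_) (ciInf_le ?_ (⟨q, h.1⟩ : D))
  · rw [norm_sub_rev, norm_sub_rev x]
    exact h.2 w w.2
  · exact ⟨0, Set.forall_mem_range.2 fun _ => norm_nonneg _⟩

theorem inner_le_zero (hD : Convex ℝ D) (h : IsMetricProj D x q) {w : H} (hw : w ∈ D) :
    ⟪x - q, w - q⟫ ≤ 0 :=
  (norm_eq_iInf_iff_real_inner_le_zero hD h.1).1 h.norm_sub_eq_iInf w hw

theorem inner_nonneg (hD : Convex ℝ D) (h : IsMetricProj D x q) {w : H} (hw : w ∈ D) :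
    0 ≤ ⟪x - q, q - w⟫ := by
  rw [← neg_sub w q, inner_neg_right]
  linarith [h.inner_le_zero hD hw]

theorem norm_sub_le (hD : Convex ℝ D) (h : IsMetricProj D x q) {u : H} (hu : u ∈ D) :
    ‖u - q‖ ≤ ‖u - x‖ := by
  have := sq_norm_sub_add_sq_norm_sub_le (h.inner_nonneg hD hu)
  exact (sq_le_sq₀ (norm_nonneg _) (norm_nonneg _)).1 (by nlinarith [sq_nonneg ‖q - x‖])

end IsMetricProj

theorem exists_isMetricProj {D : Set H} (hne : D.Nonempty) (hc : IsComplete D)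
    (hD : Convex ℝ D) (x : H) : ∃ q, IsMetricProj D x q := by
  obtain ⟨q, hq, h⟩ := exists_norm_eq_iInf_of_complete_convex hne hc hD x
  refine ⟨q, hq, fun w hw => ?_⟩
  rw [norm_sub_rev, h, norm_sub_rev]
  have hbdd : BddBelow (Set.range fun v : D => ‖x - v‖) :=
    ⟨0, Set.forall_mem_range.2 fun _ => norm_nonneg _⟩
  exact ciInf_le hbdd ⟨w, hw⟩

section WeakLimit

variable {ι : Type*} {l : Filter ι} {z : ι → H} {w : H}

theorem tendsto_inner_sub_of_tendsto_inner
    (hw : ∀ u, Tendsto (fun n => ⟪z n, u⟫) l (𝓝 ⟪w, u⟫)) (c u : H) :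
    Tendsto (fun n => ⟪z n - c, u⟫) l (𝓝 ⟪w - c, u⟫) := by
  simpa only [inner_sub_left] using (hw u).sub_const ⟪c, u⟫

/-- Weak compactness of bounded sets, along an ultrafilter: the limits of `⟪z n, u⟫` define a
bounded functional, represented by a vector through the Riesz isomorphism. -/
theorem exists_tendsto_inner_of_eventually_norm_le [CompleteSpace H] (U : Ultrafilter ι)
    {M : ℝ} (hM : ∀ᶠ n in U, ‖z n‖ ≤ M) :
    ∃ w, ∀ u, Tendsto (fun n => ⟪z n, u⟫) U (𝓝 ⟪w, u⟫) := by
  have hbound (u : H) : ∀ᶠ n in U, |⟪z n, u⟫| ≤ M * ‖u‖ := by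
    filter_upwards [hM] with n hn
    exact (abs_real_inner_le_norm _ _).trans (mul_le_mul_of_nonneg_right hn (norm_nonneg u))
  have hlim (u : H) : ∃ φ, Tendsto (fun n => ⟪z n, u⟫) U (𝓝 φ) := by
    obtain ⟨φ, -, hφ⟩ := (isCompact_Icc (a := -(M * ‖u‖)) (b := M * ‖u‖)).ultrafilter_le_nhds'
      (U.map fun n => ⟪z n, u⟫)
      (Ultrafilter.mem_map.2 <| by filter_upwards [hbound u] with n hn using abs_le.1 hn)
    exact ⟨φ, hφ⟩
  choose φ hφ using hlim
  let L : H →ₗ[ℝ] ℝ :=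
    { toFun := φ
      map_add' := fun u v => tendsto_nhds_unique (hφ (u + v)) <| by
        simpa only [inner_add_right] using (hφ u).add (hφ v)
      map_smul' := fun c u => tendsto_nhds_unique (hφ (c • u)) <| by
        simpa only [real_inner_smul_right, RingHom.id_apply, smul_eq_mul] using (hφ u).const_mul c }
  let Lc : H →L[ℝ] ℝ := L.mkContinuous M fun u =>
    le_of_tendsto (hφ u).abs (hbound u)
  refine ⟨(InnerProductSpace.toDual ℝ H).symm Lc, fun u => ?_⟩
  rw [InnerProductSpace.toDual_symm_apply]
  exact hφ u

variable [l.NeBot]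

theorem mem_of_tendsto_inner [CompleteSpace H] {D : Set H} (hcl : IsClosed D) (hD : Convex ℝ D)
    (hz : ∀ᶠ n in l, z n ∈ D) (hw : ∀ u, Tendsto (fun n => ⟪z n, u⟫) l (𝓝 ⟪w, u⟫)) :
    w ∈ D := by
  obtain ⟨n, hn⟩ := hz.exists
  obtain ⟨q, hq⟩ := exists_isMetricProj ⟨z n, hn⟩ hcl.isComplete hD w
  have hlim : Tendsto (fun n => ⟪z n - q, w - q⟫) l (𝓝 (‖w - q‖ ^ 2)) := by
    simpa only [real_inner_self_eq_norm_sq] using tendsto_inner_sub_of_tendsto_inner hw q (w - q)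
  have hsq : ‖w - q‖ ^ 2 ≤ 0 := le_of_tendsto hlim <| by
    filter_upwards [hz] with n hn
    rw [real_inner_comm]
    exact hq.inner_le_zero hD hn
  have hwq : w = q := sub_eq_zero.1 (norm_eq_zero.1 (by nlinarith [norm_nonneg (w - q)]))
  exact hwq ▸ hq.1

theorem norm_sub_le_of_tendsto_inner {c : H} {r : ℝ}
    (hw : ∀ u, Tendsto (fun n => ⟪z n, u⟫) l (𝓝 ⟪w, u⟫))
    (hr : Tendsto (fun n => ‖z n - c‖) l (𝓝 r)) : ‖w - c‖ ≤ r := by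
  have hr₀ : 0 ≤ r := ge_of_tendsto' hr fun n => norm_nonneg _
  have hsq : ‖w - c‖ ^ 2 ≤ r * ‖w - c‖ := by
    refine le_of_tendsto_of_tendsto (by simpa only [real_inner_self_eq_norm_sq] using
      tendsto_inner_sub_of_tendsto_inner hw c (w - c)) (hr.mul_const ‖w - c‖)
      (Eventually.of_forall fun n => real_inner_le_norm _ _)
  nlinarith [norm_nonneg (w - c)]

/-- The demiclosedness principle for nonexpansive maps. -/
theorem isFixedPt_of_tendsto_inner {D : Set H} {T : H → H}
    (hT : ∀ p ∈ D, ∀ q ∈ D, ‖T p - T q‖ ≤ ‖p - q‖) (hz : ∀ᶠ n in l, z n ∈ D) (hwD : w ∈ D)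
    {K : ℝ} (hK : ∀ᶠ n in l, ‖z n - w‖ ≤ K)
    (hw : ∀ u, Tendsto (fun n => ⟪z n, u⟫) l (𝓝 ⟪w, u⟫))
    (hfix : Tendsto (fun n => ‖T (z n) - z n‖) l (𝓝 0)) : Function.IsFixedPt T w := by
  set e := fun n => ‖T (z n) - z n‖
  have hbound : ∀ᶠ n in l,
      ‖w - T w‖ ^ 2 ≤ e n ^ 2 + 2 * K * e n - 2 * ⟪z n - w, w - T w⟫ := by
    filter_upwards [hz, hK] with n hzn hKn
    have htri : ‖z n - T w‖ ≤ e n + ‖z n - w‖ := by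
      calc ‖z n - T w‖ ≤ ‖z n - T (z n)‖ + ‖T (z n) - T w‖ :=
            norm_sub_le_norm_sub_add_norm_sub _ _ _
        _ ≤ e n + ‖z n - w‖ := by rw [norm_sub_rev]; gcongr; exact hT _ hzn _ hwD
    have hexp : ‖z n - T w‖ ^ 2 = ‖z n - w‖ ^ 2 + 2 * ⟪z n - w, w - T w⟫ + ‖w - T w‖ ^ 2 := by
      rw [show z n - T w = (z n - w) + (w - T w) by abel, norm_add_sq_real]
    have he : 0 ≤ e n := norm_nonneg _
    nlinarith [norm_nonneg (z n - w), norm_nonneg (z n - T w)]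
  have hlim : Tendsto (fun n => e n ^ 2 + 2 * K * e n - 2 * ⟪z n - w, w - T w⟫) l (𝓝 0) := by
    have hinner := tendsto_inner_sub_of_tendsto_inner hw w (w - T w)
    simpa using ((hfix.pow 2).add (hfix.const_mul (2 * K))).sub (hinner.const_mul 2)
  have hsq : ‖w - T w‖ ^ 2 ≤ 0 := ge_of_tendsto hlim hbound
  exact (sub_eq_zero.1 (norm_eq_zero.1 (by nlinarith [norm_nonneg (w - T w)]))).symm

end WeakLimit

theorem exists_fixedPt_norm_sub_le_of_tendsto [CompleteSpace H] {D : Set H} (hcl : IsClosed D)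
    (hD : Convex ℝ D) {κ : Type*} {T : κ → H → H}
    (hT : ∀ i, ∀ p ∈ D, ∀ q ∈ D, ‖T i p - T i q‖ ≤ ‖p - q‖) {z : ℕ → H} (hz : ∀ n, z n ∈ D)
    (hfix : ∀ i, Tendsto (fun n => ‖T i (z n) - z n‖) atTop (𝓝 0)) {c : H} {r : ℝ}
    (hr : Tendsto (fun n => ‖z n - c‖) atTop (𝓝 r)) :
    ∃ w ∈ D, (∀ i, Function.IsFixedPt (T i) w) ∧ ‖w - c‖ ≤ r := by
  set U := Ultrafilter.of (atTop : Filter ℕ)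
  have hU : (U : Filter ℕ) ≤ atTop := Ultrafilter.of_le _
  have hrU := hr.mono_left hU
  have hnear : ∀ᶠ n in (U : Filter ℕ), ‖z n - c‖ ≤ r + 1 :=
    hrU.eventually (eventually_le_nhds (lt_add_one r))
  obtain ⟨w, hw⟩ := exists_tendsto_inner_of_eventually_norm_le U (z := z) (M := r + 1 + ‖c‖) <| by
    filter_upwards [hnear] with n hn
    linarith [norm_le_norm_sub_add (z n) c]
  have hwD := mem_of_tendsto_inner hcl hD (Eventually.of_forall hz) hw
  refine ⟨w, hwD, fun i => ?_, norm_sub_le_of_tendsto_inner hw hrU⟩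
  refine isFixedPt_of_tendsto_inner (hT i) (Eventually.of_forall hz) hwD (K := r + 1 + ‖c - w‖)
    ?_ hw ((hfix i).mono_left hU)
  filter_upwards [hnear] with n hn
  linarith [norm_sub_le_norm_sub_add_norm_sub (z n) c w]

section HybridMethod

variable {x : ℕ → H}

theorem subset_setOf_inner_nonneg_of_isMetricProj {K : ℕ → Set H} {F : Set H}
    (hK : ∀ n, Convex ℝ (K n)) (hFK : ∀ n, F ⊆ K n)
    (hx : ∀ n, IsMetricProj (K n ∩ {v | 0 ≤ ⟪x 0 - x n, x n - v⟫}) (x 0) (x (n + 1))) :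
    ∀ n, F ⊆ {v | 0 ≤ ⟪x 0 - x n, x n - v⟫}
  | 0, _, _ => by simp
  | n + 1, _, hu => (hx n).inner_nonneg ((hK n).inter (convex_setOf_inner_nonneg _ _))
      ⟨hFK n hu, subset_setOf_inner_nonneg_of_isMetricProj hK hFK hx n hu⟩

theorem exists_tendsto_norm_sub_of_inner_nonneg {R : ℝ}
    (hQ : ∀ n, 0 ≤ ⟪x 0 - x n, x n - x (n + 1)⟫) (hR : ∀ n, ‖x n - x 0‖ ≤ R) :
    ∃ r ≤ R, Tendsto (fun n => ‖x n - x 0‖) atTop (𝓝 r) ∧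
      Tendsto (fun n => ‖x (n + 1) - x n‖) atTop (𝓝 0) := by
  have hstep n := sq_norm_sub_add_sq_norm_sub_le (hQ n)
  have hmono : Monotone fun n => ‖x n - x 0‖ := monotone_nat_of_le_succ fun n =>
    (sq_le_sq₀ (norm_nonneg _) (norm_nonneg _)).1
      (by linarith [hstep n, sq_nonneg ‖x (n + 1) - x n‖])
  have hlim := tendsto_atTop_ciSup hmono ⟨R, Set.forall_mem_range.2 hR⟩
  refine ⟨_, ciSup_le hR, hlim, ?_⟩
  have hgap : Tendsto (fun n => ‖x (n + 1) - x 0‖ ^ 2 - ‖x n - x 0‖ ^ 2) atTop (𝓝 0) := by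
    simpa using ((hlim.comp (tendsto_add_atTop_nat 1)).pow 2).sub (hlim.pow 2)
  have hsq := squeeze_zero (fun n => sq_nonneg ‖x (n + 1) - x n‖)
    (fun n => by linarith [hstep n]) hgap
  simpa [Real.sqrt_sq (norm_nonneg _)] using hsq.sqrt

theorem tendsto_of_inner_nonneg_of_tendsto_norm_sub {p : H}
    (hp : ∀ n, 0 ≤ ⟪x 0 - x n, x n - p⟫)
    (h : Tendsto (fun n => ‖x n - x 0‖) atTop (𝓝 ‖p - x 0‖)) : Tendsto x atTop (𝓝 p) := by
  rw [tendsto_iff_norm_sub_tendsto_zero]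
  have hgap : Tendsto (fun n => ‖p - x 0‖ ^ 2 - ‖x n - x 0‖ ^ 2) atTop (𝓝 0) := by
    rw [← sub_self (‖p - x 0‖ ^ 2)]
    exact (h.pow 2).const_sub _
  have hsq := squeeze_zero (fun n => sq_nonneg ‖x n - p‖) (fun n => by
    rw [norm_sub_rev]; linarith [sq_norm_sub_add_sq_norm_sub_le (hp n)]) hgap
  simpa [Real.sqrt_sq (norm_nonneg _)] using hsq.sqrt

end HybridMethod

end InnerProduct

theorem parallel_hybrid_fixed_point_convergence_general
    {H : Type*} [NormedAddCommGroup H] [InnerProductSpace ℝ H] [CompleteSpace H]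
    -- `C` is a nonempty closed convex subset of `H`
    (C : Set H) (hCcl : IsClosed C) (hCcv : Convex ℝ C)
    (N : ℕ)
    -- the mappings `S_i : C → C` are nonexpansive
    (S : Fin N → H → H) (hSmap : ∀ i, ∀ p ∈ C, S i p ∈ C)
    (hS : ∀ i, ∀ p ∈ C, ∀ q ∈ C, ‖S i p - S i q‖ ≤ ‖p - q‖)
    -- `{α_n} ⊂ [0,1]` with `limsup α_n < 1`
    (a : ℕ → ℝ) (ha : ∀ n, a n ∈ Set.Icc (0 : ℝ) 1)
    (ha' : Filter.limsup a Filter.atTop < 1)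
    -- `F = ∩ F(S_i)` is nonempty
    (F : Set H) (hF : F = {p | p ∈ C ∧ ∀ i, S i p = p})
    -- the algorithm
    (x : ℕ → H) (z : ℕ → H) (y : ℕ → Fin N → H) (inn : ℕ → Fin N)
    (Cn Qn : ℕ → Set H)
    -- `z_n = P_C x_n`
    (hz : ∀ n, IsMetricProj C (x n) (z n))
    -- `y_n^i = α_n z_n + (1 - α_n) S_i z_n`
    (hy : ∀ n i, y n i = a n • z n + (1 - a n) • S i (z n))
    -- `i_n` attains `max{‖y_n^i - x_n‖}`, `ȳ_n = y_n^{i_n}`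
    (hin : ∀ n i, ‖y n i - x n‖ ≤ ‖y n (inn n) - x n‖)
    -- `C_n = {v : ‖v - ȳ_n‖ ≤ ‖v - x_n‖}`
    (hCn : ∀ n, Cn n = {v | ‖v - y n (inn n)‖ ≤ ‖v - x n‖})
    -- `Q_n = {v : ⟨x_0 - x_n, x_n - v⟩ ≥ 0}`
    (hQn : ∀ n, Qn n = {v | 0 ≤ ⟪x 0 - x n, x n - v⟫})
    -- `x_{n+1} = P_{C_n ∩ Q_n} x_0`
    (hx : ∀ n, IsMetricProj (Cn n ∩ Qn n) (x 0) (x (n + 1)))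
    -- `P_F x_0`
    (p : H) (hp : IsMetricProj F (x 0) p) :
    Filter.Tendsto x Filter.atTop (nhds p) := by
  have hzC n : z n ∈ C := (hz n).1
  have hyC n i : y n i ∈ C := hy n i ▸
    hCcv (hzC n) (hSmap i _ (hzC n)) (ha n).1 (sub_nonneg.2 (ha n).2) (add_sub_cancel _ _)
  have hFCn n : F ⊆ Cn n := by
    rw [hF, hCn, hy]
    rintro u ⟨huC, hfix⟩
    refine (norm_sub_convex_combo_le (ha n) ?_).trans ((hz n).norm_sub_le hCcv huC)
    simpa only [hfix] using hS (inn n) u huC (z n) (hzC n)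
  simp only [hQn] at hx
  have hFQ := subset_setOf_inner_nonneg_of_isMetricProj
    (fun n => hCn n ▸ convex_setOf_norm_sub_le_norm_sub _ _) hFCn hx
  have hpR : ∀ n, ‖x n - x 0‖ ≤ ‖p - x 0‖
    | 0 => by simp
    | n + 1 => (hx n).2 p ⟨hFCn n hp.1, hFQ n hp.1⟩
  obtain ⟨r, hrR, hr, hstep⟩ := exists_tendsto_norm_sub_of_inner_nonneg (fun n => (hx n).1.2) hpR
  have hyx : Tendsto (fun n => ‖y n (inn n) - x n‖) atTop (𝓝 0) :=
    squeeze_zero (fun _ => norm_nonneg _) (fun n => norm_sub_le_two_mul_of_norm_sub_le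
      (by have hmem := (hx n).1.1; rwa [hCn] at hmem)) (by simpa using hstep.const_mul 2)
  have hzx : Tendsto (fun n => ‖z n - x n‖) atTop (𝓝 0) :=
    squeeze_zero (fun _ => norm_nonneg _) (fun n => (hz n).2 _ (hyC n _)) hyx
  have hSz i : Tendsto (fun n => ‖S i (z n) - z n‖) atTop (𝓝 0) :=
    tendsto_zero_of_one_sub_mul_le (e := fun n => ‖y n (inn n) - x n‖ + ‖z n - x n‖) ha'
      (fun n => (ha n).2) (fun _ => norm_nonneg _)
      (fun n => (one_sub_mul_norm_sub_le (ha n).2 _ _ (x n)).trans <| by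
        rw [← hy]; gcongr; exact hin n i)
      (by simpa using hyx.add hzx)
  obtain ⟨w, hwC, hwS, hwr⟩ := exists_fixedPt_norm_sub_le_of_tendsto hCcl hCcv hS hzC hSz
    (tendsto_norm_sub_of_tendsto_norm_sub_zero hr hzx)
  have hRr : ‖p - x 0‖ ≤ r := (hp.2 w (hF ▸ ⟨hwC, hwS⟩)).trans hwr
  exact tendsto_of_inner_nonneg_of_tendsto_norm_sub (fun n => hFQ n hp.1) (le_antisymm hrR hRr ▸ hr)

theorem parallel_hybrid_fixed_point_convergence
    {H : Type*} [NormedAddCommGroup H] [InnerProductSpace ℝ H] [CompleteSpace H]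
    -- `C` is a nonempty closed convex subset of `H`
    (C : Set H) (hCne : C.Nonempty) (hCcl : IsClosed C) (hCcv : Convex ℝ C)
    (N : ℕ)
    -- the mappings `S_i : C → C` are nonexpansive
    (S : Fin N → H → H) (hSmap : ∀ i, ∀ p ∈ C, S i p ∈ C)
    (hS : ∀ i, ∀ p ∈ C, ∀ q ∈ C, ‖S i p - S i q‖ ≤ ‖p - q‖)
    -- `{α_n} ⊂ [0,1]` with `limsup α_n < 1`
    (a : ℕ → ℝ) (ha : ∀ n, a n ∈ Set.Icc (0 : ℝ) 1)
    (ha' : Filter.limsup a Filter.atTop < 1)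
    -- `F = ∩ F(S_i)` is nonempty
    (F : Set H) (hF : F = {p | p ∈ C ∧ ∀ i, S i p = p}) (hFne : F.Nonempty)
    -- the algorithm
    (x : ℕ → H) (z : ℕ → H) (y : ℕ → Fin N → H) (inn : ℕ → Fin N)
    (Cn Qn : ℕ → Set H)
    -- `z_n = P_C x_n`
    (hz : ∀ n, IsMetricProj C (x n) (z n))
    -- `y_n^i = α_n z_n + (1 - α_n) S_i z_n`
    (hy : ∀ n i, y n i = a n • z n + (1 - a n) • S i (z n))
    -- `i_n` attains `max{‖y_n^i - x_n‖}`, `ȳ_n = y_n^{i_n}`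
    (hin : ∀ n i, ‖y n i - x n‖ ≤ ‖y n (inn n) - x n‖)
    -- `C_n = {v : ‖v - ȳ_n‖ ≤ ‖v - x_n‖}`
    (hCn : ∀ n, Cn n = {v | ‖v - y n (inn n)‖ ≤ ‖v - x n‖})
    -- `Q_n = {v : ⟨x_0 - x_n, x_n - v⟩ ≥ 0}`
    (hQn : ∀ n, Qn n = {v | 0 ≤ ⟪x 0 - x n, x n - v⟫})
    -- `x_{n+1} = P_{C_n ∩ Q_n} x_0`
    (hx : ∀ n, IsMetricProj (Cn n ∩ Qn n) (x 0) (x (n + 1)))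
    -- `P_F x_0`
    (p : H) (hp : IsMetricProj F (x 0) p) :
    Filter.Tendsto x Filter.atTop (nhds p) :=
  parallel_hybrid_fixed_point_convergence_general C hCcl hCcv N S hSmap hS a ha ha' F hF x z y inn
    Cn Qn hz hy hin hCn hQn hx p hp
end

section
/- Under the stated hypotheses, for the parallel hybrid algorithm one has F ⊆ C_n ∩ Q_n for all n ≥ 0; in particular each C_n ∩ Q_n is nonempty, so x_{n+1} = P_{C_n ∩ Q_n} x_0 is well defined. -/
open Filter Topology
open scoped RealInnerProductSpace

section Helpers

variable {H : Type*} [NormedAddCommGroup H] [InnerProductSpace ℝ H]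

lemma projChar {D : Set H} (hD : Convex ℝ D) {x p : H} (h : IsMetricProj D x p) :
    ∀ w ∈ D, ⟪x - p, w - p⟫ ≤ 0 := by
  haveI : Nonempty D := ⟨⟨p, h.1⟩⟩
  have hbdd : BddBelow (Set.range fun w : D => ‖x - (w : H)‖) := by
    refine ⟨0, ?_⟩
    rintro b ⟨w, rfl⟩
    exact norm_nonneg _
  have hinf : ‖x - p‖ = ⨅ w : D, ‖x - w‖ := by
    refine le_antisymm ?_ ?_
    · exact le_ciInf fun w => by
        rw [norm_sub_rev, norm_sub_rev x w]; exact h.2 w w.2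
    · exact ciInf_le hbdd ⟨p, h.1⟩
  exact (norm_eq_iInf_iff_real_inner_le_zero hD h.1).mp hinf

lemma projNonexp {D : Set H} (hD : Convex ℝ D) {x1 x2 p1 p2 : H}
    (h1 : IsMetricProj D x1 p1) (h2 : IsMetricProj D x2 p2) :
    ‖p1 - p2‖ ≤ ‖x1 - x2‖ := by
  have A1 := projChar hD h1 p2 h2.1
  have A2 := projChar hD h2 p1 h1.1
  have key : ‖p1 - p2‖ ^ 2 ≤ ⟪x1 - x2, p1 - p2⟫ := by
    have hn : ‖p1 - p2‖ ^ 2 = ⟪p1 - p2, p1 - p2⟫ := (real_inner_self_eq_norm_sq _).symm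
    simp only [inner_sub_left, inner_sub_right] at A1 A2 hn ⊢
    linarith [real_inner_comm p1 p2, real_inner_comm x1 p1, real_inner_comm x2 p2,
      real_inner_comm x1 p2, real_inner_comm x2 p1]
  have cs := real_inner_le_norm (x1 - x2) (p1 - p2)
  nlinarith [norm_nonneg (p1 - p2), norm_nonneg (x1 - x2)]

lemma convex_inner_le' (b : H) (c : ℝ) : Convex ℝ {v : H | ⟪b, v⟫ ≤ c} :=
  convex_halfSpace_le ⟨fun p q => inner_add_right b p q, fun t p => real_inner_smul_right b p t⟩ c

lemma convex_norm_le_norm (aa bb : H) : Convex ℝ {v : H | ‖v - aa‖ ≤ ‖v - bb‖} := by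
  have hset : {v : H | ‖v - aa‖ ≤ ‖v - bb‖} = {v : H | ⟪bb - aa, v⟫ ≤ (‖bb‖ ^ 2 - ‖aa‖ ^ 2) / 2} := by
    ext v
    simp only [Set.mem_setOf_eq]
    have ea : ‖v - aa‖ ^ 2 = ‖v‖ ^ 2 - 2 * ⟪v, aa⟫ + ‖aa‖ ^ 2 := norm_sub_sq_real v aa
    have eb : ‖v - bb‖ ^ 2 = ‖v‖ ^ 2 - 2 * ⟪v, bb⟫ + ‖bb‖ ^ 2 := norm_sub_sq_real v bb
    have ei : ⟪bb - aa, v⟫ = ⟪bb, v⟫ - ⟪aa, v⟫ := inner_sub_left bb aa v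
    constructor
    · intro h
      have hsq : ‖v - aa‖ ^ 2 ≤ ‖v - bb‖ ^ 2 := by nlinarith [norm_nonneg (v - aa)]
      nlinarith [real_inner_comm v aa, real_inner_comm v bb]
    · intro h
      have hsq : ‖v - aa‖ ^ 2 ≤ ‖v - bb‖ ^ 2 := by
        nlinarith [real_inner_comm v aa, real_inner_comm v bb]
      nlinarith [norm_nonneg (v - aa), norm_nonneg (v - bb)]
  rw [hset]
  exact convex_inner_le' _ _

lemma convex_qset (u w : H) : Convex ℝ {v : H | 0 ≤ ⟪u, w - v⟫} := by
  have hset : {v : H | 0 ≤ ⟪u, w - v⟫} = {v : H | ⟪u, v⟫ ≤ ⟪u, w⟫} := by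
    ext v
    simp only [Set.mem_setOf_eq, inner_sub_right]
    constructor <;> intro h <;> linarith
  rw [hset]
  exact convex_inner_le' _ _

end Helpers
theorem F_subset_Cn_inter_Qn
    {H : Type*} [NormedAddCommGroup H] [InnerProductSpace ℝ H] [CompleteSpace H]
    -- `C` is a nonempty closed convex subset of `H`
    (C : Set H) (hCne : C.Nonempty) (hCcl : IsClosed C) (hCcv : Convex ℝ C)
    (K M N : ℕ)
    -- the bifunctions `f_l : C × C → ℝ` satisfy conditions (A1)-(A4)
    (f : Fin K → H → H → ℝ)
    (hfA1 : ∀ l, ∀ p ∈ C, f l p p = 0)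
    (hfA2 : ∀ l, ∀ p ∈ C, ∀ q ∈ C, f l p q + f l q p ≤ 0)
    (hfA3 : ∀ l, ∀ p ∈ C, ∀ q ∈ C, ∀ w ∈ C,
      Filter.limsup (fun t : ℝ => f l (t • w + (1 - t) • p) q)
        (nhdsWithin 0 (Set.Ioi 0)) ≤ f l p q)
    (hfA4cv : ∀ l, ∀ p ∈ C, ConvexOn ℝ C (f l p))
    (hfA4lsc : ∀ l, ∀ p ∈ C, LowerSemicontinuousOn (f l p) C)
    -- the mappings `A_k : C → H` are `α`-inverse strongly monotone
    (α : ℝ) (hα : 0 < α) (A : Fin M → H → H)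
    (hA : ∀ k, ∀ p ∈ C, ∀ q ∈ C, α * ‖A k p - A k q‖ ^ 2 ≤ ⟪A k p - A k q, p - q⟫)
    -- the mappings `S_i : C → C` are nonexpansive
    (S : Fin N → H → H) (hSmap : ∀ i, ∀ p ∈ C, S i p ∈ C)
    (hS : ∀ i, ∀ p ∈ C, ∀ q ∈ C, ‖S i p - S i q‖ ≤ ‖p - q‖)
    -- parameters: `λ ∈ (0, 2α)`, `{α_n} ⊂ [0,1]`, `{r_n} ⊂ [d, ∞)`, `d > 0`
    (lam : ℝ) (hlam : lam ∈ Set.Ioo 0 (2 * α))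
    (a : ℕ → ℝ) (ha : ∀ n, a n ∈ Set.Icc (0 : ℝ) 1)
    (d : ℝ) (hd : 0 < d) (r : ℕ → ℝ) (hr : ∀ n, d ≤ r n)
    -- `F = (∩ EP(f_l)) ∩ (∩ F(S_i)) ∩ (∩ VI(A_k, C))` is nonempty
    (F : Set H)
    (hF : F = {p | p ∈ C ∧ (∀ l, ∀ q ∈ C, 0 ≤ f l p q) ∧ (∀ i, S i p = p) ∧
      (∀ k, ∀ q ∈ C, 0 ≤ ⟪A k p, q - p⟫)})
    (hFne : F.Nonempty)
    -- the parallel hybrid algorithm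
    (x : ℕ → H) (z : ℕ → Fin K → H) (uu : ℕ → Fin M → H) (y : ℕ → Fin N → H)
    (ln : ℕ → Fin K) (kn : ℕ → Fin M) (inn : ℕ → Fin N)
    (Cn Qn : ℕ → Set H)
    -- `z_n^l` solves the regularized equilibrium problem for `f_l` at `x_n`
    (hz : ∀ n l, z n l ∈ C ∧
      ∀ q ∈ C, 0 ≤ f l (z n l) q + (1 / r n) * ⟪q - z n l, z n l - x n⟫)
    -- `l_n` attains `max{‖z_n^l - x_n‖}`, `z̄_n = z_n^{l_n}`
    (hln : ∀ n l, ‖z n l - x n‖ ≤ ‖z n (ln n) - x n‖)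
    -- `u_n^k = P_C(z̄_n - λ A_k z̄_n)`
    (hu : ∀ n k, IsMetricProj C (z n (ln n) - lam • A k (z n (ln n))) (uu n k))
    -- `k_n` attains `max{‖u_n^k - x_n‖}`, `ū_n = u_n^{k_n}`
    (hkn : ∀ n k, ‖uu n k - x n‖ ≤ ‖uu n (kn n) - x n‖)
    -- `y_n^i = α_n ū_n + (1 - α_n) S_i ū_n`
    (hy : ∀ n i, y n i = a n • uu n (kn n) + (1 - a n) • S i (uu n (kn n)))
    -- `i_n` attains `max{‖y_n^i - x_n‖}`, `ȳ_n = y_n^{i_n}`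
    (hin : ∀ n i, ‖y n i - x n‖ ≤ ‖y n (inn n) - x n‖)
    -- `C_n = {v : ‖v - ȳ_n‖ ≤ ‖v - z̄_n‖ ≤ ‖v - x_n‖}`
    (hCn : ∀ n, Cn n = {v | ‖v - y n (inn n)‖ ≤ ‖v - z n (ln n)‖ ∧
      ‖v - z n (ln n)‖ ≤ ‖v - x n‖})
    -- `Q_n = {v : ⟨x_0 - x_n, x_n - v⟩ ≥ 0}`
    (hQn : ∀ n, Qn n = {v | 0 ≤ ⟪x 0 - x n, x n - v⟫})
    -- `x_{n+1} = P_{C_n ∩ Q_n} x_0`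
    (hx : ∀ n, IsMetricProj (Cn n ∩ Qn n) (x 0) (x (n + 1)))
    :
    (∀ n, F ⊆ Cn n ∩ Qn n) ∧ ∀ n, (Cn n ∩ Qn n).Nonempty := by
  -- convexity of Cn n and Qn n
  have hCnConv : ∀ n, Convex ℝ (Cn n) := by
    intro n
    rw [hCn n]
    exact (convex_norm_le_norm (y n (inn n)) (z n (ln n))).inter
      (convex_norm_le_norm (z n (ln n)) (x n))
  have hQnConv : ∀ n, Convex ℝ (Qn n) := fun n => by
    rw [hQn n]; exact convex_qset _ _
  -- F ⊆ Cn n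
  have hFC : ∀ n, F ⊆ Cn n := by
    intro n p hp
    rw [hF] at hp
    obtain ⟨hpC, hpEP, hpS, hpVI⟩ := hp
    set l := ln n
    set k := kn n
    set i := inn n
    set zb := z n l with hzb
    set ub := uu n k with hub
    have hzC : zb ∈ C := (hz n l).1
    have hrpos : 0 < r n := lt_of_lt_of_le hd (hr n)
    -- step 1 : ‖p - zb‖ ≤ ‖p - x n‖
    have h1 := (hz n l).2 p hpC
    have h2 := hfA2 l zb hzC p hpC
    have h3 := hpEP l zb hzC
    have hip : 0 ≤ ⟪p - zb, zb - x n⟫ := by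
      by_contra hcon
      push_neg at hcon
      have : (1 / r n) * ⟪p - zb, zb - x n⟫ < 0 :=
        mul_neg_of_pos_of_neg (by positivity) hcon
      linarith
    have hz_le : ‖p - zb‖ ≤ ‖p - x n‖ := by
      have e : ‖p - x n‖ ^ 2 = ‖p - zb‖ ^ 2 + 2 * ⟪p - zb, zb - x n⟫ + ‖zb - x n‖ ^ 2 := by
        rw [← sub_add_sub_cancel p zb (x n), norm_add_sq_real]
      nlinarith [norm_nonneg (p - zb), norm_nonneg (p - x n), norm_nonneg (zb - x n)]
    -- step 2 : p is the projection of p - lam • A k p onto C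
    have hpProj : IsMetricProj C (p - lam • A k p) p := by
      refine ⟨hpC, fun w hw => ?_⟩
      have hvi := hpVI k w hw
      have e1 : p - (p - lam • A k p) = lam • A k p := by abel
      have e2 : w - (p - lam • A k p) = (w - p) + lam • A k p := by abel
      rw [e1, e2]
      have hinner : 0 ≤ ⟪w - p, lam • A k p⟫ := by
        rw [real_inner_smul_right]
        exact mul_nonneg hlam.1.le (by rw [real_inner_comm]; exact hvi)
      have hsq : ‖lam • A k p‖ ^ 2 ≤ ‖(w - p) + lam • A k p‖ ^ 2 := by
        rw [norm_add_sq_real]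
        nlinarith [norm_nonneg (w - p)]
      nlinarith [norm_nonneg (lam • A k p), norm_nonneg ((w - p) + lam • A k p)]
    -- step 3 : ‖ub - p‖ ≤ ‖zb - p‖
    have hune : ‖ub - p‖ ≤ ‖(zb - lam • A k zb) - (p - lam • A k p)‖ :=
      projNonexp hCcv (hu n k) hpProj
    have hism := hA k zb hzC p hpC
    have hdiff : (zb - lam • A k zb) - (p - lam • A k p) = (zb - p) - lam • (A k zb - A k p) := by
      rw [smul_sub]; abel
    have hlamabs : ‖lam • (A k zb - A k p)‖ = lam * ‖A k zb - A k p‖ := by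
      rw [norm_smul, Real.norm_eq_abs, abs_of_pos hlam.1]
    have hu_le : ‖ub - p‖ ≤ ‖zb - p‖ := by
      have e3 : ‖(zb - p) - lam • (A k zb - A k p)‖ ^ 2
          = ‖zb - p‖ ^ 2 - 2 * (lam * ⟪A k zb - A k p, zb - p⟫)
            + lam ^ 2 * ‖A k zb - A k p‖ ^ 2 := by
        rw [norm_sub_sq_real, real_inner_smul_right, hlamabs,
          real_inner_comm (zb - p) (A k zb - A k p)]
        ring
      have hsq2 : ‖(zb - p) - lam • (A k zb - A k p)‖ ^ 2 ≤ ‖zb - p‖ ^ 2 := by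
        have ha1 : lam * (α * ‖A k zb - A k p‖ ^ 2) ≤ lam * ⟪A k zb - A k p, zb - p⟫ :=
          mul_le_mul_of_nonneg_left hism hlam.1.le
        have ha2 : 0 ≤ lam * ((2 * α - lam) * ‖A k zb - A k p‖ ^ 2) :=
          mul_nonneg hlam.1.le (mul_nonneg (by linarith [hlam.2]) (sq_nonneg _))
        nlinarith
      rw [hdiff] at hune
      nlinarith [norm_nonneg (ub - p), norm_nonneg (zb - p),
        norm_nonneg ((zb - p) - lam • (A k zb - A k p))]
    -- step 4 : ‖p - y n i‖ ≤ ‖p - zb‖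
    have hubC : ub ∈ C := (hu n k).1
    have hy_le : ‖p - y n i‖ ≤ ‖p - zb‖ := by
      rw [hy n i]
      have edec : p - (a n • ub + (1 - a n) • S i ub)
          = a n • (p - ub) + (1 - a n) • (p - S i ub) := by
        module
      rw [edec]
      have hnx : ‖p - S i ub‖ ≤ ‖p - ub‖ := by
        have := hS i p hpC ub hubC
        rwa [hpS i] at this
      have hpu : ‖p - ub‖ ≤ ‖p - zb‖ := by
        rw [norm_sub_rev p ub, norm_sub_rev p zb]; exact hu_le
      calc ‖a n • (p - ub) + (1 - a n) • (p - S i ub)‖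
          ≤ ‖a n • (p - ub)‖ + ‖(1 - a n) • (p - S i ub)‖ := norm_add_le _ _
        _ = a n * ‖p - ub‖ + (1 - a n) * ‖p - S i ub‖ := by
            rw [norm_smul, norm_smul, Real.norm_eq_abs, Real.norm_eq_abs,
              abs_of_nonneg (ha n).1, abs_of_nonneg (by linarith [(ha n).2] : 0 ≤ 1 - a n)]
        _ ≤ a n * ‖p - ub‖ + (1 - a n) * ‖p - ub‖ := by
            have h1an : (0:ℝ) ≤ 1 - a n := by linarith [(ha n).2]
            nlinarith
        _ = ‖p - ub‖ := by ring
        _ ≤ ‖p - zb‖ := hpu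
    rw [hCn n]
    exact ⟨hy_le, hz_le⟩
  -- F ⊆ Qn n, by induction
  have hFQ : ∀ n, F ⊆ Qn n := by
    intro n
    induction n with
    | zero =>
      intro p hp
      rw [hQn 0]
      simp
    | succ m ih =>
      intro p hp
      rw [hQn (m + 1)]
      have hDconv : Convex ℝ (Cn m ∩ Qn m) := (hCnConv m).inter (hQnConv m)
      have hchar := projChar hDconv (hx m) p ⟨hFC m hp, ih hp⟩
      simp only [Set.mem_setOf_eq]
      rw [show x (m + 1) - p = -(p - x (m + 1)) by abel, inner_neg_right]
      linarith
  obtain ⟨p0, hp0⟩ := hFne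
  exact ⟨fun n => Set.subset_inter (hFC n) (hFQ n),
    fun n => ⟨p0, Set.subset_inter (hFC n) (hFQ n) hp0⟩⟩
end
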